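/- arXiv:2402.18219 — 2 statements merged into one kernel-verified Lean document; each statement's English description precedes it below -/
import Mathlib

section
/- Let $X$ be an $n\times n$ matrix of independent standard Gaussian random variables, and let $\hat{X}$ denote the $(n-1)\times n$ matrix obtained from $X$ by removing its first row. Then $\mathbb{E}[|\det X|] = \sqrt{2/\pi}\cdot \mathbb{E}[\sqrt{\det(\hat{X}\hat{X}^{tr})}]$. -/
open MeasureTheory ProbabilityTheory Matrix Real Filter Set NNReal


lemma my_integral_mul_exp_neg_mul_sq {b : ℝ} (hb : 0 < b) :
    ∫ r in Ioi (0:ℝ), r * Real.exp (-b * r ^ 2) = (2 * b)⁻¹ := by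
  have hderiv : ∀ x ∈ Ici (0:ℝ), HasDerivAt (fun x : ℝ => -(2 * b)⁻¹ * Real.exp (-b * x ^ 2))
      (x * Real.exp (-b * x ^ 2)) x := by
    intro x _
    have h := (((hasDerivAt_pow 2 x).const_mul (-b)).exp).const_mul (-(2 * b)⁻¹)
    refine h.congr_deriv ?_
    field_simp
    ring
  have htend : Tendsto (fun x : ℝ => -(2 * b)⁻¹ * Real.exp (-b * x ^ 2)) atTop (nhds 0) := by
    have h1 : Tendsto (fun x : ℝ => -b * x ^ 2) atTop atBot := by
      have h0 := (tendsto_pow_atTop (two_ne_zero)).const_mul_atTop hb (α := ℝ)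
      have := tendsto_neg_atBot_iff.mpr h0
      refine this.congr fun x => by ring
    have h2 := Real.tendsto_exp_atBot.comp h1
    have h3 := h2.const_mul (-(2 * b)⁻¹)
    simpa using h3
  have h := integral_Ioi_of_hasDerivAt_of_tendsto' hderiv
    ((integrable_mul_exp_neg_mul_sq hb).integrableOn) htend
  rw [h]; simp

lemma integrable_pdf_mul_abs (v : ℝ≥0) (hv : v ≠ 0) :
    Integrable (fun x : ℝ => gaussianPDFReal 0 v x * |x|) := by
  have hw : (0:ℝ) < v := lt_of_le_of_ne v.coe_nonneg (by exact_mod_cast hv.symm)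
  have hb : (0:ℝ) < (2 * (v:ℝ))⁻¹ := by positivity
  have key : (fun x : ℝ => gaussianPDFReal 0 v x * |x|)
      = fun x => (Real.sqrt (2 * π * v))⁻¹ * |x * Real.exp (-(2 * (v:ℝ))⁻¹ * x ^ 2)| := by
    funext x
    rw [gaussianPDFReal, abs_mul, abs_of_nonneg (Real.exp_nonneg _)]
    rw [mul_comm |x| _]
    ring_nf
  rw [key]
  exact ((integrable_mul_exp_neg_mul_sq hb).abs).const_mul _

lemma integral_pdf_mul_abs (v : ℝ≥0) (hv : v ≠ 0) :
    ∫ x : ℝ, gaussianPDFReal 0 v x * |x| = Real.sqrt (2 / π) * Real.sqrt v := by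
  have hw : (0:ℝ) < v := lt_of_le_of_ne v.coe_nonneg (by exact_mod_cast hv.symm)
  have hb : (0:ℝ) < (2 * (v:ℝ))⁻¹ := by positivity
  have key : (fun x : ℝ => gaussianPDFReal 0 v x * |x|)
      = fun x => (Real.sqrt (2 * π * v))⁻¹ * (|x| * Real.exp (-(2 * (v:ℝ))⁻¹ * |x| ^ 2)) := by
    funext x
    rw [gaussianPDFReal, sq_abs]
    ring_nf
  rw [key, MeasureTheory.integral_const_mul]
  rw [integral_comp_abs (f := fun x => x * Real.exp (-(2 * (v:ℝ))⁻¹ * x ^ 2)),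
    my_integral_mul_exp_neg_mul_sq hb]
  have h2 : (2:ℝ) * (2 * (2 * (v:ℝ))⁻¹)⁻¹ = 2 * (v:ℝ) := by field_simp
  rw [h2, ← Real.sqrt_sq (show (0:ℝ) ≤ 2*(v:ℝ) by positivity), ← Real.sqrt_inv,
    ← Real.sqrt_mul (by positivity), ← Real.sqrt_mul (by positivity : (0:ℝ) ≤ 2/π)]
  congr 1
  field_simp

lemma lintegral_abs_gaussianReal (v : ℝ≥0) :
    ∫⁻ x, ENNReal.ofReal |x| ∂(gaussianReal 0 v)
      = ENNReal.ofReal (Real.sqrt (2 / π) * Real.sqrt v) := by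
  by_cases hv : v = 0
  · subst hv
    rw [gaussianReal_zero_var, lintegral_dirac]
    simp
  · rw [gaussianReal_of_var_ne_zero _ hv,
      lintegral_withDensity_eq_lintegral_mul _ (measurable_gaussianPDF _ _)
        (measurable_abs.ennreal_ofReal)]
    have : (fun x => (gaussianPDF 0 v * fun x => ENNReal.ofReal |x|) x)
        = fun x => ENNReal.ofReal (gaussianPDFReal 0 v x * |x|) := by
      funext x
      simp only [Pi.mul_apply, gaussianPDF]
      rw [ENNReal.ofReal_mul (gaussianPDFReal_nonneg _ _ _)]
    rw [this, ← ofReal_integral_eq_lintegral_ofReal (integrable_pdf_mul_abs v hv)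
      (Filter.Eventually.of_forall fun x => mul_nonneg (gaussianPDFReal_nonneg _ _ _) (abs_nonneg _)),
      integral_pdf_mul_abs v hv]

section conv
variable (v₁ v₂ : ℝ≥0) (t : ℝ)

lemma conv_key (h₁ : v₁ ≠ 0) (h₂ : v₂ ≠ 0) :
    (fun x : ℝ => gaussianPDFReal 0 v₁ x * gaussianPDFReal x v₂ t)
      = fun x => gaussianPDFReal 0 (v₁ + v₂) t *
          ((Real.sqrt (π / ((↑v₁ + ↑v₂) / (2 * ↑v₁ * ↑v₂))))⁻¹ *
            Real.exp (-(((↑v₁ + ↑v₂) / (2 * ↑v₁ * ↑v₂)) : ℝ) *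
              (x - ↑v₁ * t / (↑v₁ + ↑v₂)) ^ 2)) := by
  have ha : (0:ℝ) < v₁ := lt_of_le_of_ne v₁.coe_nonneg (by exact_mod_cast h₁.symm)
  have hb : (0:ℝ) < v₂ := lt_of_le_of_ne v₂.coe_nonneg (by exact_mod_cast h₂.symm)
  set a := (v₁ : ℝ)
  set b := (v₂ : ℝ)
  set k : ℝ := (a + b) / (2 * a * b) with hk_def
  have hk : 0 < k := by positivity
  funext x
  rw [gaussianPDFReal, gaussianPDFReal, gaussianPDFReal]
  push_cast
  have hconst : (Real.sqrt (2 * π * a))⁻¹ * (Real.sqrt (2 * π * b))⁻¹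
      = (Real.sqrt (2 * π * (a + b)))⁻¹ * (Real.sqrt (π / k))⁻¹ := by
    rw [← mul_inv, ← mul_inv, ← Real.sqrt_mul (by positivity), ← Real.sqrt_mul (by positivity)]
    congr 1
    rw [hk_def]
    field_simp
  have hexp : Real.exp (-(x - 0) ^ 2 / (2 * a)) * Real.exp (-(t - x) ^ 2 / (2 * b))
      = Real.exp (-t ^ 2 / (2 * (a + b))) * Real.exp (-k * (x - a * t / (a + b)) ^ 2) := by
    rw [← Real.exp_add, ← Real.exp_add]
    congr 1
    rw [hk_def]
    field_simp
    ring_nf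
  calc (Real.sqrt (2 * π * a))⁻¹ * Real.exp (-(x - 0) ^ 2 / (2 * a)) *
        ((Real.sqrt (2 * π * b))⁻¹ * Real.exp (-(t - x) ^ 2 / (2 * b)))
      = ((Real.sqrt (2 * π * a))⁻¹ * (Real.sqrt (2 * π * b))⁻¹) *
        (Real.exp (-(x - 0) ^ 2 / (2 * a)) * Real.exp (-(t - x) ^ 2 / (2 * b))) := by ring
    _ = _ := by rw [hconst, hexp]; simp only [a, b]; ring

lemma conv_integrable (h₁ : v₁ ≠ 0) (h₂ : v₂ ≠ 0) :
    Integrable (fun x : ℝ => gaussianPDFReal 0 v₁ x * gaussianPDFReal x v₂ t) := by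
  have ha : (0:ℝ) < v₁ := lt_of_le_of_ne v₁.coe_nonneg (by exact_mod_cast h₁.symm)
  have hb : (0:ℝ) < v₂ := lt_of_le_of_ne v₂.coe_nonneg (by exact_mod_cast h₂.symm)
  have hk : (0:ℝ) < ((↑v₁ + ↑v₂) / (2 * ↑v₁ * ↑v₂) : ℝ) := by positivity
  rw [conv_key v₁ v₂ t h₁ h₂]
  exact (((integrable_exp_neg_mul_sq hk).comp_sub_right _).const_mul _).const_mul _

lemma conv_integral (h₁ : v₁ ≠ 0) (h₂ : v₂ ≠ 0) :
    ∫ x : ℝ, gaussianPDFReal 0 v₁ x * gaussianPDFReal x v₂ t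
      = gaussianPDFReal 0 (v₁ + v₂) t := by
  have ha : (0:ℝ) < v₁ := lt_of_le_of_ne v₁.coe_nonneg (by exact_mod_cast h₁.symm)
  have hb : (0:ℝ) < v₂ := lt_of_le_of_ne v₂.coe_nonneg (by exact_mod_cast h₂.symm)
  have hk : (0:ℝ) < ((↑v₁ + ↑v₂) / (2 * ↑v₁ * ↑v₂) : ℝ) := by positivity
  rw [conv_key v₁ v₂ t h₁ h₂]
  rw [MeasureTheory.integral_const_mul, MeasureTheory.integral_const_mul,
    integral_sub_right_eq_self (fun y => Real.exp (-(((↑v₁ + ↑v₂) / (2 * ↑v₁ * ↑v₂)) : ℝ) * y ^ 2)) _,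
    integral_gaussian]
  rw [inv_mul_cancel₀ (by positivity : Real.sqrt (π / ((↑v₁ + ↑v₂) / (2 * ↑v₁ * ↑v₂) : ℝ)) ≠ 0), mul_one]
end conv

lemma map_add_gaussian (v₁ v₂ : ℝ≥0) :
    Measure.map (fun p : ℝ × ℝ => p.1 + p.2) ((gaussianReal 0 v₁).prod (gaussianReal 0 v₂))
      = gaussianReal 0 (v₁ + v₂) := by
  by_cases h₁ : v₁ = 0
  · subst h₁
    rw [gaussianReal_zero_var, Measure.dirac_prod,
      Measure.map_map (by fun_prop) (by fun_prop)]
    simp only [Function.comp_def, zero_add]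
    simp
  by_cases h₂ : v₂ = 0
  · subst h₂
    rw [gaussianReal_zero_var, Measure.prod_dirac,
      Measure.map_map (by fun_prop) (by fun_prop)]
    simp only [Function.comp_def, add_zero]
    simp
  -- main case
  have hpdfmeas : Measurable (Function.uncurry fun x t => gaussianPDF x v₂ t) := by
    have : (Function.uncurry fun x t => gaussianPDF x v₂ t)
        = fun p : ℝ × ℝ => ENNReal.ofReal (gaussianPDFReal 0 v₂ (p.2 - p.1)) := by
      funext p
      simp only [Function.uncurry, gaussianPDF, gaussianPDFReal]
      norm_num
    rw [this]
    exact ((measurable_gaussianPDFReal 0 v₂).comp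
      (measurable_snd.sub measurable_fst)).ennreal_ofReal
  refine Measure.ext fun s hs => ?_
  rw [Measure.map_apply (by fun_prop) hs, Measure.prod_apply (measurable_add hs)]
  have hfiber : ∀ x : ℝ, (Prod.mk x ⁻¹' ((fun p : ℝ × ℝ => p.1 + p.2) ⁻¹' s))
      = (fun y => x + y) ⁻¹' s := fun x => rfl
  simp_rw [hfiber]
  have hmap : ∀ x : ℝ, gaussianReal 0 v₂ ((fun y => x + y) ⁻¹' s)
      = ∫⁻ t in s, gaussianPDF x v₂ t := by
    intro x
    rw [← Measure.map_apply (measurable_const_add x) hs]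
    have : (gaussianReal 0 v₂).map (fun y => x + y) = gaussianReal x v₂ := by
      simpa using gaussianReal_map_const_add (μ := 0) (v := v₂) x
    rw [this, gaussianReal_apply _ h₂]
  simp_rw [hmap]
  rw [gaussianReal_of_var_ne_zero _ h₁,
    lintegral_withDensity_eq_lintegral_mul _ (measurable_gaussianPDF _ _)
      (Measurable.lintegral_prod_right (f := fun x t => gaussianPDF x v₂ t) hpdfmeas)]
  simp only [Pi.mul_apply]
  have hmul : ∀ x : ℝ, gaussianPDF 0 v₁ x * ∫⁻ t in s, gaussianPDF x v₂ t
      = ∫⁻ t in s, gaussianPDF 0 v₁ x * gaussianPDF x v₂ t := fun x =>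
    (lintegral_const_mul _ (measurable_gaussianPDF x v₂)).symm
  simp_rw [hmul]
  rw [lintegral_lintegral_swap (((measurable_gaussianPDF 0 v₁).comp
    measurable_fst).mul hpdfmeas).aemeasurable]
  have hinner : ∀ t : ℝ, ∫⁻ x, gaussianPDF 0 v₁ x * gaussianPDF x v₂ t
      = gaussianPDF 0 (v₁ + v₂) t := by
    intro t
    have h1 : ∀ x : ℝ, gaussianPDF 0 v₁ x * gaussianPDF x v₂ t
        = ENNReal.ofReal (gaussianPDFReal 0 v₁ x * gaussianPDFReal x v₂ t) := by
      intro x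
      rw [gaussianPDF, gaussianPDF, ← ENNReal.ofReal_mul (gaussianPDFReal_nonneg _ _ _)]
    simp_rw [h1]
    rw [← ofReal_integral_eq_lintegral_ofReal (conv_integrable v₁ v₂ t h₁ h₂)
      (Filter.Eventually.of_forall fun x =>
        mul_nonneg (gaussianPDFReal_nonneg _ _ _) (gaussianPDFReal_nonneg _ _ _)),
      conv_integral v₁ v₂ t h₁ h₂, gaussianPDF]
  simp_rw [hinner]
  exact (gaussianReal_apply _ (by simp [h₁]) s).symm

lemma map_linear_pi_gaussian :
    ∀ (m : ℕ) (c : Fin m → ℝ),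
    Measure.map (fun y : Fin m → ℝ => ∑ i, c i * y i) (Measure.pi fun _ => gaussianReal 0 1)
      = gaussianReal 0 (∑ i, NNReal.mk (c i ^ 2) (sq_nonneg _)) := by
  intro m
  induction m with
  | zero =>
    intro c
    simp only [Finset.univ_eq_empty, Finset.sum_empty]
    rw [show (fun _ : Fin 0 → ℝ => (0:ℝ)) = fun _ => (0:ℝ) from rfl, Measure.map_const]
    simp [gaussianReal_zero_var]
  | succ m ih =>
    intro c
    have e := (measurePreserving_piFinSuccAbove (fun _ : Fin (m + 1) => gaussianReal 0 1) 0)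
    have hPi := (e.symm (MeasurableEquiv.piFinSuccAbove (fun _ => ℝ) 0)).map_eq
    rw [← hPi, Measure.map_map (by fun_prop) (MeasurableEquiv.measurable _)]
    have hcomp : ((fun y : Fin (m+1) → ℝ => ∑ i, c i * y i) ∘
          (MeasurableEquiv.piFinSuccAbove (fun _ => ℝ) 0).symm)
        = (fun p : ℝ × ℝ => p.1 + p.2) ∘
          (Prod.map (fun x : ℝ => c 0 * x) (fun z : Fin m → ℝ => ∑ j, c j.succ * z j)) := by
      funext p
      simp only [Function.comp_apply, MeasurableEquiv.piFinSuccAbove, MeasurableEquiv.symm,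
        MeasurableEquiv.coe_mk, Equiv.symm_symm, Fin.insertNthEquiv_apply, Prod.map]
      rw [Fin.insertNth_zero']
      rw [Fin.sum_univ_succ]
      simp [Fin.cons_zero, Fin.cons_succ]
    rw [hcomp, ← Measure.map_map (by fun_prop) (by fun_prop),
      ← Measure.map_prod_map _ _ (by fun_prop) (by fun_prop)]
    have h1 : Measure.map (fun x : ℝ => c 0 * x) (gaussianReal 0 1)
        = gaussianReal 0 (NNReal.mk (c 0 ^ 2) (sq_nonneg _)) := by
      have := gaussianReal_map_const_mul (μ := 0) (v := 1) (c 0)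
      simpa using this
    rw [h1, ih (fun j => c j.succ), map_add_gaussian]
    congr 1
    apply NNReal.coe_injective
    push_cast
    rw [Fin.sum_univ_succ]

lemma det_cons {n : ℕ} (A : Matrix (Fin n) (Fin (n+1)) ℝ) (y : Fin (n+1) → ℝ) :
    (Matrix.of (Fin.cons y (fun i => A i))).det
      = ∑ j : Fin (n+1), ((-1:ℝ)^(j:ℕ) * (A.submatrix id j.succAbove).det) * y j := by
  rw [det_succ_row_zero]
  refine Finset.sum_congr rfl fun j _ => ?_
  have hsub : (Matrix.of (Fin.cons y (fun i => A i))).submatrix Fin.succ j.succAbove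
      = A.submatrix id j.succAbove := by
    ext i k
    simp [Fin.cons_succ]
  rw [hsub]
  simp only [Matrix.of_apply, Fin.cons_zero]
  ring

lemma cauchy_binet_special {n : ℕ} (A : Matrix (Fin n) (Fin (n+1)) ℝ) :
    ∑ j : Fin (n+1), ((-1:ℝ)^(j:ℕ) * (A.submatrix id j.succAbove).det)^2 = (A * Aᵀ).det := by
  set c : Fin (n+1) → ℝ := fun j => (-1:ℝ)^(j:ℕ) * (A.submatrix id j.succAbove).det with hc
  set M : Matrix (Fin (n+1)) (Fin (n+1)) ℝ := Matrix.of (Fin.cons c (fun i => A i)) with hM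
  have h1 : ∀ y : Fin (n+1) → ℝ, (Matrix.of (Fin.cons y (fun i => A i))).det = ∑ j, c j * y j :=
    fun y => det_cons A y
  set s : ℝ := ∑ j, c j ^ 2 with hs
  have h2 : M.det = s := by
    rw [hM, h1 c, hs]; exact Finset.sum_congr rfl fun j _ => (sq (c j)).symm
  have h3 : ∀ i, ∑ j, c j * A i j = 0 := by
    intro i
    rw [← h1 (A i)]
    refine det_zero_of_row_eq (i := 0) (j := i.succ) (Fin.succ_ne_zero i).symm ?_
    funext k
    simp [Fin.cons_succ]
  have h4 : (M * Mᵀ).det = s * (A * Aᵀ).det := by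
    rw [det_succ_row_zero]
    have hzero : ∀ j : Fin (n+1), j ≠ 0 → (-1:ℝ)^(j:ℕ) * (M * Mᵀ) 0 j *
        ((M * Mᵀ).submatrix Fin.succ j.succAbove).det = 0 := by
      intro j hj
      obtain ⟨i, rfl⟩ := Fin.eq_succ_of_ne_zero hj
      have : (M * Mᵀ) 0 i.succ = 0 := by
        rw [Matrix.mul_apply]
        simpa [hM, Fin.cons_succ, Matrix.transpose_apply] using h3 i
      rw [this]; ring
    rw [Finset.sum_eq_single 0 (fun j _ hj => hzero j hj) (by simp)]
    have hMM0 : (M * Mᵀ) 0 0 = s := by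
      rw [Matrix.mul_apply, hs]
      refine Finset.sum_congr rfl fun j _ => ?_
      simp [hM, sq]
    have hsubMM : (M * Mᵀ).submatrix Fin.succ (Fin.succAbove 0) = A * Aᵀ := by
      ext i k
      rw [Matrix.submatrix_apply, Fin.succAbove_zero, Matrix.mul_apply, Matrix.mul_apply]
      refine Finset.sum_congr rfl fun l _ => ?_
      simp [hM, Fin.cons_succ]
    rw [hMM0, hsubMM]
    simp
  have h5 : s ^ 2 = s * (A * Aᵀ).det := by
    rw [← h4, Matrix.det_mul, Matrix.det_transpose, h2, sq]
  by_cases hs0 : s = 0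
  · -- degenerate case
    have hczero : ∀ j, c j = 0 := by
      intro j
      have h := (Finset.sum_eq_zero_iff_of_nonneg (fun j _ => sq_nonneg (c j))).mp
        (hs.symm.trans hs0) j (Finset.mem_univ j)
      exact pow_eq_zero_iff two_ne_zero |>.mp h
    rw [hs0]
    by_contra hdet
    have hne : (A * Aᵀ).det ≠ 0 := fun h => hdet (h ▸ rfl)
    have hu : IsUnit (A * Aᵀ) := (Matrix.isUnit_iff_isUnit_det _).mpr (isUnit_iff_ne_zero.mpr hne)
    have hrank : (A * Aᵀ).rank = n := by
      rw [Matrix.rank_of_isUnit _ hu, Fintype.card_fin]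
    have hrA : A.rank = n := by rw [← Matrix.rank_self_mul_transpose, hrank]
    have hspan : (Set.range (fun i => A i)).finrank ℝ = n := by
      rw [Set.finrank, show (fun i => A i) = A.row from rfl, ← Matrix.rank_eq_finrank_span_row, hrA]
    have hli : LinearIndependent ℝ (fun i => A i) :=
      linearIndependent_iff_card_eq_finrank_span.mpr (by rw [hspan, Fintype.card_fin])
    have htop : Submodule.span ℝ (Set.range (fun i => A i)) ≠ ⊤ := by
      intro h
      have h2 : (Set.range (fun i => A i)).finrank ℝ = n + 1 := by
        rw [Set.finrank, h, finrank_top, Module.finrank_pi, Fintype.card_fin]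
      omega
    obtain ⟨y, hy⟩ : ∃ y, y ∉ Submodule.span ℝ (Set.range (fun i => A i)) := by
      by_contra h
      push_neg at h
      exact htop (Submodule.eq_top_iff'.mpr h)
    have hli2 : LinearIndependent ℝ (Fin.cons y (fun i => A i) : Fin (n+1) → Fin (n+1) → ℝ) :=
      hli.fin_cons hy
    have hunit : IsUnit (Matrix.of (Fin.cons y (fun i => A i))) :=
      Matrix.linearIndependent_rows_iff_isUnit.mp hli2
    have hdet2 : (Matrix.of (Fin.cons y (fun i => A i))).det ≠ 0 :=
      IsUnit.ne_zero ((Matrix.isUnit_iff_isUnit_det _).mp hunit)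
    apply hdet2
    rw [h1 y]
    exact Finset.sum_eq_zero fun j _ => by rw [hczero j, zero_mul]
  · exact mul_left_cancel₀ hs0 (by rw [← sq]; exact h5)

lemma det_AAt_nonneg {n : ℕ} (A : Matrix (Fin n) (Fin (n+1)) ℝ) : 0 ≤ (A * Aᵀ).det := by
  rw [← cauchy_binet_special A]
  positivity

lemma inner_step {n : ℕ} (A : Matrix (Fin n) (Fin (n+1)) ℝ) :
    ∫⁻ y : Fin (n+1) → ℝ, ENNReal.ofReal |(Matrix.of (Fin.cons y (fun i => A i))).det|
        ∂(Measure.pi fun _ => gaussianReal 0 1)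
      = ENNReal.ofReal (Real.sqrt (2 / π) * Real.sqrt ((A * Aᵀ).det)) := by
  set c : Fin (n+1) → ℝ := fun j => (-1:ℝ)^(j:ℕ) * (A.submatrix id j.succAbove).det with hc
  have h1 : ∀ y : Fin (n+1) → ℝ, (Matrix.of (Fin.cons y (fun i => A i))).det
      = ∑ j, c j * y j := fun y => det_cons A y
  simp_rw [h1]
  have hmeas : Measurable (fun y : Fin (n+1) → ℝ => ∑ j, c j * y j) := by fun_prop
  rw [show (∫⁻ y : Fin (n+1) → ℝ, ENNReal.ofReal |∑ j, c j * y j|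
        ∂(Measure.pi fun _ => gaussianReal 0 1))
      = ∫⁻ x, ENNReal.ofReal |x| ∂(Measure.map (fun y : Fin (n+1) → ℝ => ∑ j, c j * y j)
          (Measure.pi fun _ => gaussianReal 0 1)) from
    (lintegral_map measurable_abs.ennreal_ofReal hmeas).symm]
  rw [map_linear_pi_gaussian, lintegral_abs_gaussianReal]
  congr 2
  rw [← cauchy_binet_special A]
  push_cast
  rfl

/-- For an `(n+1) × (n+1)` matrix of i.i.d. standard Gaussian entries,
`E|det X| = √(2/π) · E[√(det (X̂ X̂ᵀ))]`, where `X̂` is `X` with its first row removed. -/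
theorem stmt3 (n : ℕ) :
    (∫ x : Fin (n + 1) → Fin (n + 1) → ℝ,
        |(Matrix.of x).det|
        ∂(Measure.pi fun _ => Measure.pi fun _ => gaussianReal 0 1))
      = Real.sqrt (2 / Real.pi) *
        ∫ x : Fin (n + 1) → Fin (n + 1) → ℝ,
          Real.sqrt (((Matrix.of x).submatrix Fin.succ id *
            ((Matrix.of x).submatrix Fin.succ id)ᵀ).det)
          ∂(Measure.pi fun _ => Measure.pi fun _ => gaussianReal 0 1) := by
  have hcontdet : Continuous fun x : Fin (n+1) → Fin (n+1) → ℝ => (Matrix.of x).det :=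
    continuous_id.matrix_det
  have hcontsub : Continuous fun x : Fin (n+1) → Fin (n+1) → ℝ =>
      (((Matrix.of x).submatrix Fin.succ id) * ((Matrix.of x).submatrix Fin.succ id)ᵀ).det :=
    ((continuous_id.matrix_submatrix _ _).matrix_mul
      (continuous_id.matrix_submatrix _ _).matrix_transpose).matrix_det
  -- rewrite both integrals as lintegrals
  rw [integral_eq_lintegral_of_nonneg_ae (Eventually.of_forall fun x => abs_nonneg _)
    (hcontdet.abs.aestronglyMeasurable),
    integral_eq_lintegral_of_nonneg_ae (Eventually.of_forall fun x => Real.sqrt_nonneg _)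
    (hcontsub.sqrt.aestronglyMeasurable)]
  set ν : Measure (Fin (n+1) → ℝ) := Measure.pi fun _ => gaussianReal 0 1 with hν
  set Pi' : Measure (Fin n → Fin (n+1) → ℝ) := Measure.pi fun _ => ν with hPi'
  have e := measurePreserving_piFinSuccAbove (fun _ : Fin (n+1) => ν) 0
  set E := MeasurableEquiv.piFinSuccAbove (fun _ : Fin (n+1) => Fin (n+1) → ℝ) 0 with hE
  have hPi := (e.symm E).map_eq
  have hEsymm : ∀ p : (Fin (n+1) → ℝ) × (Fin n → Fin (n+1) → ℝ),
      E.symm p = Fin.cons p.1 p.2 := by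
    intro p
    simp only [hE, MeasurableEquiv.piFinSuccAbove, MeasurableEquiv.symm, MeasurableEquiv.coe_mk,
      Equiv.symm_symm, Fin.insertNthEquiv_apply]
    exact Fin.insertNth_zero' p.1 p.2
  -- LHS lintegral
  have hL : (∫⁻ x, ENNReal.ofReal |(Matrix.of x).det|
        ∂(Measure.pi fun _ : Fin (n+1) => ν))
      = ENNReal.ofReal (Real.sqrt (2/π)) *
        ∫⁻ z, ENNReal.ofReal (Real.sqrt ((Matrix.of z * (Matrix.of z)ᵀ).det)) ∂Pi' := by
    rw [← hPi, lintegral_map (hcontdet.abs.measurable.ennreal_ofReal) E.symm.measurable,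
      lintegral_prod_symm (fun a => ENNReal.ofReal |(Matrix.of (E.symm a)).det|)
        (Measurable.aemeasurable (by
          exact (hcontdet.abs.measurable.ennreal_ofReal).comp E.symm.measurable))]
    have hinner : ∀ z : Fin n → Fin (n+1) → ℝ,
        (∫⁻ y, ENNReal.ofReal |(Matrix.of (E.symm (y, z))).det| ∂ν)
          = ENNReal.ofReal (Real.sqrt (2/π)) *
            ENNReal.ofReal (Real.sqrt ((Matrix.of z * (Matrix.of z)ᵀ).det)) := by
      intro z
      have heq : ∀ y : Fin (n+1) → ℝ, (Matrix.of (E.symm (y, z))).det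
          = (Matrix.of (Fin.cons y (fun i => (Matrix.of z) i))).det := by
        intro y
        rw [hEsymm (y, z)]
        rfl
      simp_rw [heq]
      rw [inner_step (Matrix.of z),
        ENNReal.ofReal_mul (Real.sqrt_nonneg _)]
    simp_rw [hinner]
    rw [lintegral_const_mul _ ?hm]
    case hm =>
      have hcont2 : Continuous fun z : Fin n → Fin (n+1) → ℝ =>
          ((Matrix.of z) * (Matrix.of z)ᵀ).det :=
        (continuous_id.matrix_mul continuous_id.matrix_transpose).matrix_det
      exact hcont2.sqrt.measurable.ennreal_ofReal
  -- RHS lintegral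
  have hR : (∫⁻ x, ENNReal.ofReal (Real.sqrt (((Matrix.of x).submatrix Fin.succ id *
          ((Matrix.of x).submatrix Fin.succ id)ᵀ).det)) ∂(Measure.pi fun _ : Fin (n+1) => ν))
      = ∫⁻ z, ENNReal.ofReal (Real.sqrt ((Matrix.of z * (Matrix.of z)ᵀ).det)) ∂Pi' := by
    rw [← hPi, lintegral_map (hcontsub.sqrt.measurable.ennreal_ofReal) E.symm.measurable,
      lintegral_prod_symm (fun a => ENNReal.ofReal (Real.sqrt
          (((Matrix.of (E.symm a)).submatrix Fin.succ id *
            ((Matrix.of (E.symm a)).submatrix Fin.succ id)ᵀ).det)))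
        (Measurable.aemeasurable (by
          exact (hcontsub.sqrt.measurable.ennreal_ofReal).comp E.symm.measurable))]
    have hinner : ∀ z : Fin n → Fin (n+1) → ℝ, ∀ y : Fin (n+1) → ℝ,
        (Matrix.of (E.symm (y, z))).submatrix Fin.succ id = Matrix.of z := by
      intro z y
      rw [hEsymm (y, z)]
      ext i j
      simp [Fin.cons_succ]
    calc ∫⁻ z, (∫⁻ y, ENNReal.ofReal (Real.sqrt (((Matrix.of (E.symm (y, z))).submatrix Fin.succ id *
            ((Matrix.of (E.symm (y, z))).submatrix Fin.succ id)ᵀ).det)) ∂ν) ∂Pi'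
        = ∫⁻ z, (∫⁻ _, ENNReal.ofReal (Real.sqrt ((Matrix.of z * (Matrix.of z)ᵀ).det)) ∂ν) ∂Pi' := by
          refine lintegral_congr fun z => lintegral_congr fun y => ?_
          rw [hinner z y]
      _ = ∫⁻ z, ENNReal.ofReal (Real.sqrt ((Matrix.of z * (Matrix.of z)ᵀ).det)) ∂Pi' := by
          refine lintegral_congr fun z => ?_
          rw [lintegral_const]
          simp [hν]
  rw [hL, hR, ENNReal.toReal_mul, ENNReal.toReal_ofReal (Real.sqrt_nonneg _)]
end

section
/- For every real $t > 0$, the quantity $\big(1/2 - J_1(t)^2/(1-J_0(t)^2)\big) / \sqrt{1-J_0(t)^2}$ lies in the interval $[0, 1]$, where $J_0$ and $J_1$ are Bessel functions of the first kind of orders $0$ and $1$. -/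
/-- The Bessel function of the first kind of (non-negative integer) order `α`,
defined by its power series `J_α(r) = ∑ (-1)^k (r/2)^{2k+α} / (k! (α+k)!)`. -/
noncomputable def besselJ (α : ℕ) (r : ℝ) : ℝ :=
  ∑' k : ℕ, (-1 : ℝ) ^ k * (r / 2) ^ (2 * k + α) /
    (Nat.factorial k * Nat.factorial (α + k))

namespace BesselAux

/-- the k-th term of the series -/
noncomputable def bt (α k : ℕ) (t : ℝ) : ℝ :=
  (-1 : ℝ) ^ k * (t / 2) ^ (2 * k + α) / (Nat.factorial k * Nat.factorial (α + k))

lemma besselJ_eq (α : ℕ) (t : ℝ) : besselJ α t = ∑' k, bt α k t := rfl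

lemma abs_bt (α k : ℕ) (t : ℝ) :
    |bt α k t| = (|t| / 2) ^ (2 * k + α) / (Nat.factorial k * Nat.factorial (α + k)) := by
  rw [bt, abs_div]
  congr 1
  · rw [abs_mul, abs_pow, abs_neg, abs_one, one_pow, one_mul, abs_pow, abs_div, abs_two]
  · exact abs_of_nonneg (by positivity)

lemma fact_le_fact_mul (α k : ℕ) :
    (Nat.factorial α : ℝ) * Nat.factorial k ≤ Nat.factorial (α + k) := by
  have := Nat.factorial_mul_factorial_dvd_factorial_add α k
  exact_mod_cast Nat.le_of_dvd (Nat.factorial_pos _) this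

lemma abs_bt_le (α k : ℕ) (t : ℝ) :
    |bt α k t| ≤ (|t| / 2) ^ α / Nat.factorial α * ((t ^ 2 / 4) ^ k / Nat.factorial k) := by
  rw [abs_bt]
  have h1 : ((Nat.factorial α : ℝ)) * Nat.factorial k ≤ (Nat.factorial k : ℝ) * Nat.factorial (α + k) := by
    have := fact_le_fact_mul α k
    have hk : (1:ℝ) ≤ Nat.factorial k := by exact_mod_cast Nat.one_le_iff_ne_zero.2 (Nat.factorial_ne_zero k)
    nlinarith [this, (Nat.factorial_pos k).le, (Nat.cast_pos (α := ℝ)).2 (Nat.factorial_pos (α+k))]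
  have h2 : (|t| / 2) ^ (2 * k + α) = (|t| / 2) ^ α * (t ^ 2 / 4) ^ k := by
    rw [pow_add, mul_comm]
    congr 1
    rw [pow_mul]
    congr 1
    rw [div_pow, sq_abs]
    norm_num
  rw [h2]
  rw [div_mul_div_comm] at *
  apply div_le_div_of_nonneg_left _ _ _
  · positivity
  · positivity
  · exact_mod_cast h1

lemma summable_bt (α : ℕ) (t : ℝ) : Summable fun k => bt α k t := by
  apply Summable.of_abs
  apply Summable.of_nonneg_of_le (fun k => abs_nonneg _) (fun k => abs_bt_le α k t)
  exact ((Real.summable_pow_div_factorial (t^2/4)).mul_left _)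

lemma abs_besselJ_le (α : ℕ) (t : ℝ) :
    |besselJ α t| ≤ (|t| / 2) ^ α / Nat.factorial α * Real.exp (t ^ 2 / 4) := by
  rw [besselJ_eq]
  calc |∑' k, bt α k t| ≤ ∑' k, |bt α k t| := by
        simpa using norm_tsum_le_tsum_norm (f := fun k => bt α k t) (by simpa using (summable_bt α t).abs)
    _ ≤ ∑' k, (|t| / 2) ^ α / Nat.factorial α * ((t ^ 2 / 4) ^ k / Nat.factorial k) := by
        apply Summable.tsum_le_tsum (fun k => abs_bt_le α k t) (summable_bt α t).abs
        exact (Real.summable_pow_div_factorial (t^2/4)).mul_left _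
    _ = (|t| / 2) ^ α / Nat.factorial α * Real.exp (t ^ 2 / 4) := by
        rw [tsum_mul_left, Real.exp_eq_exp_ℝ, NormedSpace.exp_eq_tsum_div]
lemma besselJ_zero_zero : besselJ 0 0 = 1 := by
  rw [besselJ_eq]
  rw [tsum_eq_single 0]
  · simp [bt]
  · intro k hk
    simp [bt, zero_pow, (by omega : 2 * k + 0 ≠ 0), hk]

lemma besselJ_succ_zero (α : ℕ) : besselJ (α + 1) 0 = 0 := by
  rw [besselJ_eq]
  convert tsum_zero with k
  simp [bt, zero_pow, (by omega : 2 * k + (α + 1) ≠ 0)]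

lemma abs_bt_succ_le (α k : ℕ) (t : ℝ) : |bt α (k+1) t| ≤ t^2/4 * |bt α k t| := by
  rw [abs_bt, abs_bt]
  have h2 : (|t| / 2) ^ (2 * (k+1) + α) = t^2/4 * (|t| / 2) ^ (2 * k + α) := by
    have : 2 * (k+1) + α = 2 + (2 * k + α) := by ring
    rw [this, pow_add, div_pow, sq_abs]
    norm_num
  rw [h2, mul_div_assoc]
  apply mul_le_mul_of_nonneg_left _ (by positivity)
  apply div_le_div_of_nonneg_left (by positivity) (by positivity)
  have h3 : (k+1).factorial = (k+1) * k.factorial := rfl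
  have h4 : (α + (k+1)).factorial = (α + k + 1) * (α + k).factorial := by
    have : α + (k+1) = (α + k) + 1 := by omega
    rw [this, Nat.factorial_succ]
  rw [h3, h4]
  push_cast
  have h5 : (1:ℝ) ≤ (k+1) * (α+k+1) := by
    have h6 : (0:ℝ) ≤ (k:ℝ) := Nat.cast_nonneg k
    have h7 : (0:ℝ) ≤ (α:ℝ) := Nat.cast_nonneg α
    nlinarith
  calc (k.factorial : ℝ) * (α+k).factorial
      ≤ ((k+1) * (α+k+1)) * ((k.factorial : ℝ) * (α+k).factorial) := by
        apply le_mul_of_one_le_left (by positivity) h5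
    _ = ((k:ℝ)+1) * k.factorial * (((α:ℝ)+k+1) * (α+k).factorial) := by ring

lemma abs_bt_add_le (α n k : ℕ) (t : ℝ) (ht : 0 ≤ t) :
    |bt α (n+k) t| ≤ (t^2/4)^k * |bt α n t| := by
  induction k with
  | zero => simp
  | succ k ih =>
      have := abs_bt_succ_le α (n+k) t
      calc |bt α (n+(k+1)) t| = |bt α ((n+k)+1) t| := by ring_nf
        _ ≤ t^2/4 * |bt α (n+k) t| := abs_bt_succ_le α (n+k) t
        _ ≤ t^2/4 * ((t^2/4)^k * |bt α n t|) := by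
            apply mul_le_mul_of_nonneg_left ih (by positivity)
        _ = (t^2/4)^(k+1) * |bt α n t| := by ring

lemma tail_bound (α n : ℕ) (t : ℝ) (ht : 0 ≤ t) (ht2 : t^2/4 < 1) :
    |besselJ α t - ∑ k ∈ Finset.range n, bt α k t| ≤ |bt α n t| / (1 - t^2/4) := by
  have hs := summable_bt α t
  have heq : besselJ α t - ∑ k ∈ Finset.range n, bt α k t = ∑' k, bt α (k + n) t := by
    rw [besselJ_eq, ← Summable.sum_add_tsum_nat_add n hs]
    ring
  rw [heq]
  have hsa : Summable fun k => |bt α (k + n) t| := by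
    apply Summable.of_nonneg_of_le (fun k => abs_nonneg _)
      (fun k => by simpa [add_comm] using abs_bt_add_le α n k t ht)
    exact (summable_geometric_of_lt_one (by positivity) ht2).mul_right _
  calc |∑' k, bt α (k + n) t| ≤ ∑' k, |bt α (k + n) t| := by
        simpa using norm_tsum_le_tsum_norm (f := fun k => bt α (k + n) t) (by simpa using hsa)
    _ ≤ ∑' k : ℕ, (t^2/4)^k * |bt α n t| := by
        apply Summable.tsum_le_tsum (fun k => by simpa [add_comm] using abs_bt_add_le α n k t ht) hsa
        exact (summable_geometric_of_lt_one (by positivity) ht2).mul_right _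
    _ = |bt α n t| / (1 - t^2/4) := by
        rw [tsum_mul_right, tsum_geometric_of_lt_one (by positivity) ht2]
        ring
/-- term-wise derivative -/
noncomputable def bt' (α k : ℕ) (x : ℝ) : ℝ :=
  (-1 : ℝ) ^ k * (2 * k + α) * (x / 2) ^ (2 * k + α - 1) /
    (2 * (Nat.factorial k * Nat.factorial (α + k)))

lemma hasDerivAt_bt (α k : ℕ) (x : ℝ) : HasDerivAt (bt α k) (bt' α k x) x := by
  have base : HasDerivAt (fun y : ℝ => (y / 2) ^ (2 * k + α))
      ((2 * k + α) * (x / 2) ^ (2 * k + α - 1) * (1 / 2)) x := by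
    have h1 : HasDerivAt (fun y : ℝ => y / 2) (1 / 2) x := by
      simpa using (hasDerivAt_id x).div_const 2
    simpa [Function.comp_def] using (hasDerivAt_pow (2 * k + α) (x / 2)).comp x h1
  have key := (base.const_mul ((-1 : ℝ) ^ k)).div_const
    ((Nat.factorial k * Nat.factorial (α + k) : ℕ) : ℝ)
  have e1 : (fun y : ℝ => (-1 : ℝ) ^ k * (y / 2) ^ (2 * k + α) /
      ((Nat.factorial k * Nat.factorial (α + k) : ℕ) : ℝ)) = bt α k := by
    funext y
    simp only [bt]
    push_cast
    ring
  have e2 : bt' α k x = (-1 : ℝ) ^ k * ((2 * k + α) * (x / 2) ^ (2 * k + α - 1) * (1 / 2)) /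
      ((Nat.factorial k * Nat.factorial (α + k) : ℕ) : ℝ) := by
    simp only [bt']
    push_cast
    ring
  rw [e2, ← e1]
  exact key

lemma abs_bt'_le (α k : ℕ) {R x : ℝ} (hR : 1 ≤ R) (hx : |x| ≤ R) :
    |bt' α k x| ≤ (α + 2) * R ^ α * ((2 * R ^ 2) ^ k / Nat.factorial k) := by
  have hxR : |x / 2| ≤ R := by
    rw [abs_div, abs_two]
    calc |x| / 2 ≤ R / 2 := by linarith
      _ ≤ R := by linarith
  have h0 : |bt' α k x| ≤ (2 * k + α) * R ^ (2 * k + α - 1) /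
      (2 * (Nat.factorial k * Nat.factorial (α + k))) := by
    rw [bt', abs_div, abs_mul, abs_mul, abs_pow, abs_neg, abs_one, one_pow, one_mul, abs_pow]
    rw [abs_of_nonneg (by positivity : (0:ℝ) ≤ 2 * (Nat.factorial k * Nat.factorial (α + k)))]
    apply div_le_div_of_nonneg_right _ (by positivity)
    have : |(2 * (k:ℝ) + α)| = 2 * k + α := abs_of_nonneg (by positivity)
    calc |(2 * (k:ℝ) + ↑α)| * |x / 2| ^ (2 * k + α - 1)
        ≤ |(2 * (k:ℝ) + ↑α)| * R ^ (2 * k + α - 1) := by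
          apply mul_le_mul_of_nonneg_left _ (abs_nonneg _)
          exact pow_le_pow_left₀ (abs_nonneg _) hxR _
      _ = (2 * (k:ℝ) + α) * R ^ (2 * k + α - 1) := by rw [this]
  calc |bt' α k x| ≤ (2 * k + α) * R ^ (2 * k + α - 1) /
      (2 * (Nat.factorial k * Nat.factorial (α + k))) := h0
    _ ≤ (α + 2) * R ^ α * ((2 * R ^ 2) ^ k / Nat.factorial k) := by
        have hfk : (1:ℝ) ≤ Nat.factorial k := by
          exact_mod_cast Nat.one_le_iff_ne_zero.2 (Nat.factorial_ne_zero k)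
        have hfak : (1:ℝ) ≤ Nat.factorial (α + k) := by
          exact_mod_cast Nat.one_le_iff_ne_zero.2 (Nat.factorial_ne_zero (α + k))
        have hR0 : (0:ℝ) < R := by linarith
        have hp1 : R ^ (2 * k + α - 1) ≤ R ^ (2 * k + α) :=
          pow_le_pow_right₀ hR (by omega)
        have hp2 : R ^ (2 * k + α) = R ^ α * (R ^ 2) ^ k := by
          rw [← pow_mul, ← pow_add]; ring_nf
        have hk2 : (2 * (k:ℝ) + α) ≤ (α + 2) * 2 ^ k := by
          have h2k : (k:ℝ) ≤ 2 ^ k := by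
            exact_mod_cast (Nat.lt_two_pow_self (n := k)).le
          have : (1:ℝ) ≤ 2 ^ k := by exact_mod_cast Nat.one_le_two_pow (n := k)
          nlinarith [Nat.cast_nonneg (α := ℝ) α]
        rw [div_le_iff₀ (by positivity)]
        have key : (2 * (k:ℝ) + α) * R ^ (2 * k + α - 1)
            ≤ ((α + 2) * 2 ^ k) * (R ^ α * (R ^ 2) ^ k) := by
          calc (2 * (k:ℝ) + α) * R ^ (2 * k + α - 1)
              ≤ (2 * (k:ℝ) + α) * R ^ (2 * k + α) := by
                apply mul_le_mul_of_nonneg_left hp1 (by positivity)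
            _ = (2 * (k:ℝ) + α) * (R ^ α * (R ^ 2) ^ k) := by rw [hp2]
            _ ≤ ((α + 2) * 2 ^ k) * (R ^ α * (R ^ 2) ^ k) := by
                apply mul_le_mul_of_nonneg_right hk2 (by positivity)
        calc (2 * (k:ℝ) + α) * R ^ (2 * k + α - 1)
            ≤ ((α + 2) * 2 ^ k) * (R ^ α * (R ^ 2) ^ k) := key
          _ = ((α:ℝ) + 2) * R ^ α * ((2 * R ^ 2) ^ k / Nat.factorial k) *
              (Nat.factorial k * 1) := by
              rw [mul_pow]
              field_simp
          _ ≤ (α + 2) * R ^ α * ((2 * R ^ 2) ^ k / ↑(Nat.factorial k)) *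
              (2 * (↑(Nat.factorial k) * ↑(Nat.factorial (α + k)))) := by
              apply mul_le_mul_of_nonneg_left _ (by positivity)
              nlinarith

lemma summable_bound (α : ℕ) (R : ℝ) :
    Summable fun k : ℕ => ((α:ℝ) + 2) * R ^ α * ((2 * R ^ 2) ^ k / Nat.factorial k) :=
  (Real.summable_pow_div_factorial (2 * R ^ 2)).mul_left _

lemma summable_bt' (α : ℕ) (x : ℝ) : Summable fun k => bt' α k x := by
  apply Summable.of_norm_bounded (summable_bound α (|x| + 1))
  intro k
  simpa using abs_bt'_le α k (by linarith [abs_nonneg x]) (by linarith)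

lemma hasDerivAt_besselJ_aux (α : ℕ) (x : ℝ) :
    HasDerivAt (besselJ α) (∑' k, bt' α k x) x := by
  have hxball : x ∈ Metric.ball (0:ℝ) (|x| + 1) := by
    rw [Metric.mem_ball, Real.dist_eq, sub_zero]
    linarith
  have key : HasDerivAt (fun y => ∑' k, bt α k y) (∑' k, bt' α k x) x := by
    refine hasDerivAt_tsum_of_isPreconnected
      (summable_bound α (|x| + 1)) Metric.isOpen_ball
      ((convex_ball (0:ℝ) (|x| + 1)).isPreconnected)
      (fun k y _ => hasDerivAt_bt α k y)
      (fun k y hy => ?_) hxball (summable_bt α x) hxball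
    rw [Real.norm_eq_abs]
    apply abs_bt'_le α k (by linarith [abs_nonneg x])
    have hyb := Metric.mem_ball.1 hy
    rw [Real.dist_eq, sub_zero] at hyb
    linarith
  exact key

lemma shift_tsum (f : ℕ → ℝ) (hf : Summable f) :
    ∑' k : ℕ, (if k = 0 then (0:ℝ) else f (k - 1)) = ∑' k, f k := by
  have hg : Summable (fun k : ℕ => if k = 0 then (0:ℝ) else f (k - 1)) := by
    apply (summable_nat_add_iff 1).1
    simpa using hf
  rw [Summable.tsum_eq_zero_add hg]
  simp
lemma shift_summable (f : ℕ → ℝ) (hf : Summable f) :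
    Summable (fun k : ℕ => if k = 0 then (0:ℝ) else f (k - 1)) := by
  apply (summable_nat_add_iff 1).1
  simpa using hf

lemma hasDerivAt_besselJ_zero (x : ℝ) : HasDerivAt (besselJ 0) (-besselJ 1 x) x := by
  have h := hasDerivAt_besselJ_aux 0 x
  have e : ∀ k, bt' 0 k x = (if k = 0 then (0:ℝ) else -(bt 1 (k - 1) x)) := by
    intro k
    cases k with
    | zero => simp [bt']
    | succ j =>
      rw [if_neg (Nat.succ_ne_zero j)]
      simp only [bt', bt]
      rw [show 2 * (j+1) + 0 - 1 = 2 * j + 1 from by omega,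
        show 0 + (j+1) = j + 1 from by omega,
        show j + 1 - 1 = j from by omega,
        show 1 + j = j + 1 from by omega]
      rw [Nat.factorial_succ, pow_succ]
      have hj : ((Nat.factorial j : ℝ)) ≠ 0 := Nat.cast_ne_zero.2 (Nat.factorial_ne_zero j)
      have hj1 : ((Nat.factorial (j+1) : ℝ)) ≠ 0 := Nat.cast_ne_zero.2 (Nat.factorial_ne_zero (j+1))
      push_cast
      field_simp
      ring
  have hsum : ∑' k, bt' 0 k x = -besselJ 1 x := by
    rw [tsum_congr e, shift_tsum _ ((summable_bt 1 x).neg), tsum_neg, besselJ_eq]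
  rwa [hsum] at h

lemma hasDerivAt_besselJ_succ (α : ℕ) (x : ℝ) :
    HasDerivAt (besselJ (α + 1)) ((besselJ α x - besselJ (α + 2) x) / 2) x := by
  have h := hasDerivAt_besselJ_aux (α + 1) x
  have e : ∀ k, bt' (α + 1) k x =
      bt α k x / 2 - (if k = 0 then (0:ℝ) else bt (α + 2) (k - 1) x / 2) := by
    intro k
    cases k with
    | zero =>
      rw [if_pos rfl]
      simp only [bt', bt]
      rw [show 2 * 0 + (α + 1) - 1 = 2 * 0 + α from by omega]
      have h1 : ((Nat.factorial α : ℝ)) ≠ 0 := Nat.cast_ne_zero.2 (Nat.factorial_ne_zero α)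
      rw [show α + 1 + 0 = α + 1 from by omega, show α + 0 = α from by omega,
        Nat.factorial_succ]
      push_cast
      field_simp
      ring
    | succ j =>
      rw [if_neg (Nat.succ_ne_zero j)]
      simp only [bt', bt]
      rw [show 2 * (j+1) + (α + 1) - 1 = 2 * j + (α + 2) from by omega,
        show 2 * (j+1) + α = 2 * j + (α + 2) from by omega,
        show j + 1 - 1 = j from by omega,
        show α + 1 + (j + 1) = (α + j + 1) + 1 from by omega,
        show α + (j + 1) = α + j + 1 from by omega,
        show α + 2 + j = (α + j + 1) + 1 from by omega]
      rw [Nat.factorial_succ (α + j + 1), Nat.factorial_succ j, pow_succ]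
      have h1 : ((Nat.factorial j : ℝ)) ≠ 0 := Nat.cast_ne_zero.2 (Nat.factorial_ne_zero j)
      have h2 : ((Nat.factorial (α + j + 1) : ℝ)) ≠ 0 :=
        Nat.cast_ne_zero.2 (Nat.factorial_ne_zero (α + j + 1))
      push_cast
      field_simp
      ring
  have hsum : ∑' k, bt' (α + 1) k x = (besselJ α x - besselJ (α + 2) x) / 2 := by
    rw [tsum_congr e, Summable.tsum_sub ((summable_bt α x).div_const 2)
      (shift_summable _ ((summable_bt (α + 2) x).div_const 2)),
      shift_tsum _ ((summable_bt (α + 2) x).div_const 2),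
      tsum_div_const, tsum_div_const, ← besselJ_eq, ← besselJ_eq]
    ring
  rwa [hsum] at h

lemma besselJ_recurrence (x : ℝ) (hx : x ≠ 0) :
    besselJ 0 x + besselJ 2 x = 2 / x * besselJ 1 x := by
  have e : ∀ k, bt 0 k x + (if k = 0 then (0:ℝ) else bt 2 (k - 1) x) = 2 / x * bt 1 k x := by
    intro k
    cases k with
    | zero =>
      rw [if_pos rfl]
      simp only [bt]
      norm_num [Nat.factorial]
      field_simp
    | succ j =>
      rw [if_neg (Nat.succ_ne_zero j)]
      simp only [bt]
      rw [show 2 * (j+1) + 0 = 2 * j + 2 from by omega,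
        show j + 1 - 1 = j from by omega,
        show 2 * j + 2 = 2 * j + 2 from rfl,
        show 0 + (j + 1) = j + 1 from by omega,
        show 2 + j = j + 2 from by omega,
        show 1 + (j + 1) = j + 2 from by omega,
        show 2 * (j + 1) + 1 = 2 * j + 2 + 1 from by omega]
      rw [Nat.factorial_succ (j + 1), Nat.factorial_succ j, pow_succ _ (2 * j + 2)]
      have h1 : ((Nat.factorial j : ℝ)) ≠ 0 := Nat.cast_ne_zero.2 (Nat.factorial_ne_zero j)
      have h2 : ((Nat.factorial (j + 1) : ℝ)) ≠ 0 := Nat.cast_ne_zero.2 (Nat.factorial_ne_zero (j + 1))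
      push_cast
      field_simp
      ring
  calc besselJ 0 x + besselJ 2 x
      = ∑' k, (bt 0 k x + (if k = 0 then (0:ℝ) else bt 2 (k - 1) x)) := by
        rw [Summable.tsum_add (summable_bt 0 x) (shift_summable _ (summable_bt 2 x)),
          shift_tsum _ (summable_bt 2 x), ← besselJ_eq, ← besselJ_eq]
    _ = ∑' k, 2 / x * bt 1 k x := tsum_congr e
    _ = 2 / x * besselJ 1 x := by rw [tsum_mul_left, ← besselJ_eq]
/-- partial Parseval sum -/
noncomputable def S (N : ℕ) (x : ℝ) : ℝ :=
  besselJ 0 x ^ 2 + 2 * ∑ k ∈ Finset.range N, besselJ (k + 1) x ^ 2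

lemma hasDerivAt_S (N : ℕ) (x : ℝ) :
    HasDerivAt (S N) (-2 * besselJ N x * besselJ (N + 1) x) x := by
  induction N with
  | zero =>
    have h0 : HasDerivAt (fun y => besselJ 0 y ^ 2 + 2 * ∑ k ∈ Finset.range 0, besselJ (k + 1) y ^ 2)
        (2 * besselJ 0 x ^ 1 * (-besselJ 1 x)) x := by
      simpa using ((hasDerivAt_besselJ_zero x).fun_pow 2)
    have : S 0 = fun y => besselJ 0 y ^ 2 + 2 * ∑ k ∈ Finset.range 0, besselJ (k + 1) y ^ 2 := rfl
    rw [this]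
    convert h0 using 1
    ring
  | succ N ih =>
    have hfun : S (N + 1) = fun y => S N y + 2 * besselJ (N + 1) y ^ 2 := by
      funext y
      simp only [S, Finset.sum_range_succ]
      ring
    rw [hfun]
    have hterm : HasDerivAt (fun y => 2 * besselJ (N + 1) y ^ 2)
        (2 * (2 * besselJ (N + 1) x ^ 1 * ((besselJ N x - besselJ (N + 2) x) / 2))) x := by
      exact ((hasDerivAt_besselJ_succ N x).pow 2).const_mul 2
    convert ih.fun_add hterm using 1
    · rfl
    · rfl
    · ring

lemma S_eval_zero (N : ℕ) : S N 0 = 1 := by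
  simp [S, besselJ_zero_zero, besselJ_succ_zero]

lemma besselJ_sq_add_two_mul_sq_le_one {t : ℝ} (ht : 0 ≤ t) :
    besselJ 0 t ^ 2 + 2 * besselJ 1 t ^ 2 ≤ 1 := by
  set q : ℝ := t ^ 2 / 4 with hq
  have hq0 : 0 ≤ q := by positivity
  -- the bound sequence
  set c : ℝ := 2 * Real.exp (t ^ 2 / 2) * (t / 2) ^ 3 * t with hc
  have hc0 : 0 ≤ c := by positivity
  have main : ∀ N : ℕ, besselJ 0 t ^ 2 + 2 * besselJ 1 t ^ 2 ≤
      1 + c * (q ^ N / N.factorial) := by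
    intro N
    -- MVT bound for S (N+1)
    have hbound : ∀ y ∈ Set.Icc (0:ℝ) t,
        ‖-2 * besselJ (N + 1) y * besselJ (N + 2) y‖ ≤
          2 * Real.exp (t ^ 2 / 2) * (t / 2) ^ 3 * (q ^ N / N.factorial) := by
      intro y hy
      obtain ⟨hy0, hyt⟩ := hy
      have hJ1 : |besselJ (N + 1) y| ≤ (t / 2) ^ (N + 1) / (N + 1).factorial * Real.exp (t ^ 2 / 4) := by
        calc |besselJ (N + 1) y| ≤ (|y| / 2) ^ (N + 1) / (N + 1).factorial * Real.exp (y ^ 2 / 4) :=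
              abs_besselJ_le _ y
          _ ≤ (t / 2) ^ (N + 1) / (N + 1).factorial * Real.exp (t ^ 2 / 4) := by
              apply mul_le_mul
              · apply div_le_div_of_nonneg_right _ (by positivity)
                apply pow_le_pow_left₀ (by positivity)
                rw [abs_of_nonneg hy0]; linarith
              · exact Real.exp_le_exp.2 (by nlinarith)
              · positivity
              · positivity
      have hJ2 : |besselJ (N + 2) y| ≤ (t / 2) ^ (N + 2) / (N + 2).factorial * Real.exp (t ^ 2 / 4) := by
        calc |besselJ (N + 2) y| ≤ (|y| / 2) ^ (N + 2) / (N + 2).factorial * Real.exp (y ^ 2 / 4) :=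
              abs_besselJ_le _ y
          _ ≤ (t / 2) ^ (N + 2) / (N + 2).factorial * Real.exp (t ^ 2 / 4) := by
              apply mul_le_mul
              · apply div_le_div_of_nonneg_right _ (by positivity)
                apply pow_le_pow_left₀ (by positivity)
                rw [abs_of_nonneg hy0]; linarith
              · exact Real.exp_le_exp.2 (by nlinarith)
              · positivity
              · positivity
      have hfacts : (N.factorial : ℝ) ≤ (N + 1).factorial ∧ (N.factorial : ℝ) ≤ (N + 2).factorial := by
        constructor <;> exact_mod_cast Nat.factorial_le (by omega)
      have hN0 : (0:ℝ) < N.factorial := by exact_mod_cast Nat.factorial_pos N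
      have hN1 : (0:ℝ) < (N + 1).factorial := by exact_mod_cast Nat.factorial_pos (N+1)
      have hN2 : (0:ℝ) < (N + 2).factorial := by exact_mod_cast Nat.factorial_pos (N+2)
      rw [Real.norm_eq_abs, abs_mul, abs_mul]
      have e1 : |(-2 : ℝ)| = 2 := by norm_num
      rw [e1]
      have step : |besselJ (N + 1) y| * |besselJ (N + 2) y| ≤
          ((t / 2) ^ (N + 1) / (N + 1).factorial * Real.exp (t ^ 2 / 4)) *
          ((t / 2) ^ (N + 2) / (N + 2).factorial * Real.exp (t ^ 2 / 4)) := by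
        apply mul_le_mul hJ1 hJ2 (abs_nonneg _) (by positivity)
      have e2 : ((t / 2) ^ (N + 1) / (N + 1).factorial * Real.exp (t ^ 2 / 4)) *
          ((t / 2) ^ (N + 2) / (N + 2).factorial * Real.exp (t ^ 2 / 4)) ≤
          Real.exp (t ^ 2 / 2) * (t / 2) ^ 3 * (q ^ N / N.factorial) := by
        have hexp : Real.exp (t ^ 2 / 4) * Real.exp (t ^ 2 / 4) = Real.exp (t ^ 2 / 2) := by
          rw [← Real.exp_add]; ring_nf
        have hpow : (t / 2) ^ (N + 1) * (t / 2) ^ (N + 2) = (t / 2) ^ 3 * q ^ N := by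
          rw [← pow_add, hq]
          have : N + 1 + (N + 2) = 3 + 2 * N := by omega
          rw [this, pow_add, pow_mul]
          congr 2
          rw [div_pow]
          norm_num
        calc ((t / 2) ^ (N + 1) / (N + 1).factorial * Real.exp (t ^ 2 / 4)) *
            ((t / 2) ^ (N + 2) / (N + 2).factorial * Real.exp (t ^ 2 / 4))
            = ((t / 2) ^ (N + 1) * (t / 2) ^ (N + 2)) / ((N + 1).factorial * (N + 2).factorial) *
              (Real.exp (t ^ 2 / 4) * Real.exp (t ^ 2 / 4)) := by ring
          _ = ((t / 2) ^ 3 * q ^ N) / ((N + 1).factorial * (N + 2).factorial) *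
              Real.exp (t ^ 2 / 2) := by rw [hpow, hexp]
          _ ≤ ((t / 2) ^ 3 * q ^ N) / (N.factorial * 1) * Real.exp (t ^ 2 / 2) := by
              apply mul_le_mul_of_nonneg_right _ (Real.exp_nonneg _)
              apply div_le_div_of_nonneg_left (by positivity) (by positivity)
              have : (1:ℝ) ≤ (N + 2).factorial := by
                exact_mod_cast Nat.one_le_iff_ne_zero.2 (Nat.factorial_ne_zero _)
              nlinarith [hfacts.1, hfacts.2]
          _ = Real.exp (t ^ 2 / 2) * (t / 2) ^ 3 * (q ^ N / N.factorial) := by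
              rw [mul_one]; ring
      calc 2 * |besselJ (N + 1) y| * |besselJ (N + 2) y|
          ≤ 2 * (((t / 2) ^ (N + 1) / (N + 1).factorial * Real.exp (t ^ 2 / 4)) *
            ((t / 2) ^ (N + 2) / (N + 2).factorial * Real.exp (t ^ 2 / 4))) := by
            rw [mul_assoc]
            exact mul_le_mul_of_nonneg_left step (by norm_num)
        _ ≤ 2 * (Real.exp (t ^ 2 / 2) * (t / 2) ^ 3 * (q ^ N / N.factorial)) :=
            mul_le_mul_of_nonneg_left e2 (by norm_num)
        _ = 2 * Real.exp (t ^ 2 / 2) * (t / 2) ^ 3 * (q ^ N / N.factorial) := by ring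
    have hmvt := Convex.norm_image_sub_le_of_norm_hasDerivWithin_le
      (f := S (N + 1)) (f' := fun y => -2 * besselJ (N + 1) y * besselJ (N + 2) y)
      (s := Set.Icc (0:ℝ) t)
      (fun y _ => (hasDerivAt_S (N + 1) y).hasDerivWithinAt)
      hbound (convex_Icc 0 t) (Set.left_mem_Icc.2 ht) (Set.right_mem_Icc.2 ht)
    rw [S_eval_zero] at hmvt
    have hS1 : S (N + 1) t ≤ 1 + c * (q ^ N / N.factorial) := by
      have : |S (N + 1) t - 1| ≤ 2 * Real.exp (t ^ 2 / 2) * (t / 2) ^ 3 * (q ^ N / N.factorial) * t := by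
        have := hmvt
        rw [Real.norm_eq_abs, Real.norm_eq_abs, sub_zero, abs_of_nonneg ht] at this
        exact this
      have habs := abs_le.1 this
      have : c * (q ^ N / N.factorial) = 2 * Real.exp (t ^ 2 / 2) * (t / 2) ^ 3 * (q ^ N / N.factorial) * t := by
        rw [hc]; ring
      linarith [habs.2]
    have hle : besselJ 0 t ^ 2 + 2 * besselJ 1 t ^ 2 ≤ S (N + 1) t := by
      have h0mem : 0 ∈ Finset.range (N + 1) := by simp
      have := Finset.single_le_sum (f := fun k => besselJ (k + 1) t ^ 2)
        (fun k _ => sq_nonneg _) h0mem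
      simp only [zero_add] at this
      simp only [S]
      linarith [this]
    linarith
  -- take the limit
  have htend : Filter.Tendsto (fun N : ℕ => 1 + c * (q ^ N / N.factorial)) Filter.atTop (nhds 1) := by
    have h1 : Filter.Tendsto (fun N : ℕ => q ^ N / (N.factorial : ℝ)) Filter.atTop (nhds 0) :=
      FloorSemiring.tendsto_pow_div_factorial_atTop q
    have h2 := (h1.const_mul c).const_add 1
    simpa using h2
  exact ge_of_tendsto' htend main
lemma hasDerivAt_G (x : ℝ) (hx : x ≠ 0) :
    HasDerivAt (fun y => besselJ 0 y ^ 2 + besselJ 1 y ^ 2)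
      (-2 * besselJ 1 x ^ 2 / x) x := by
  have h1' : HasDerivAt (fun y => besselJ 0 y ^ 2) (2 * besselJ 0 x * (-besselJ 1 x)) x := by
    simpa using (hasDerivAt_besselJ_zero x).fun_pow 2
  have h2' : HasDerivAt (fun y => besselJ 1 y ^ 2)
      (2 * besselJ 1 x * ((besselJ 0 x - besselJ 2 x) / 2)) x := by
    simpa using (hasDerivAt_besselJ_succ 0 x).fun_pow 2
  have hsum := h1'.fun_add h2'
  have hval : 2 * besselJ 0 x * (-besselJ 1 x) +
      2 * besselJ 1 x * ((besselJ 0 x - besselJ 2 x) / 2) = -2 * besselJ 1 x ^ 2 / x := by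
    have hrec := besselJ_recurrence x hx
    have hJ2 : besselJ 2 x = 2 / x * besselJ 1 x - besselJ 0 x := by linarith
    rw [hJ2]
    field_simp
    ring
  rw [hval] at hsum
  exact hsum

lemma G_antitone :
    AntitoneOn (fun y => besselJ 0 y ^ 2 + besselJ 1 y ^ 2) (Set.Ici (1.1 : ℝ)) := by
  apply antitoneOn_of_deriv_nonpos (convex_Ici _)
  · intro x hx
    have hx0 : x ≠ 0 := by
      have : (1.1:ℝ) ≤ x := hx
      intro h; rw [h] at this; norm_num at this
    exact (hasDerivAt_G x hx0).continuousAt.continuousWithinAt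
  · intro x hx
    rw [interior_Ici] at hx
    have hx0 : x ≠ 0 := by
      have : (1.1:ℝ) < x := hx
      intro h; rw [h] at this; norm_num at this
    exact (hasDerivAt_G x hx0).differentiableAt.differentiableWithinAt
  · intro x hx
    rw [interior_Ici] at hx
    have hx1 : (1.1:ℝ) < x := hx
    have hx0 : (0:ℝ) < x := by linarith
    rw [(hasDerivAt_G x (ne_of_gt hx0)).deriv]
    apply div_nonpos_of_nonpos_of_nonneg _ hx0.le
    nlinarith [sq_nonneg (besselJ 1 x)]

lemma J0_11_bounds : besselJ 0 1.1 ∈ Set.Icc (0.719 : ℝ) 0.7215 := by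
  have h := tail_bound 0 3 1.1 (by norm_num) (by norm_num)
  simp only [Finset.sum_range_succ, Finset.sum_range_zero, bt, Nat.factorial] at h
  norm_num [abs_le, abs_of_nonneg] at h
  constructor <;> [linarith [h.1]; linarith [h.2]]

lemma J1_11_bounds : besselJ 1 1.1 ∈ Set.Icc (0.4708 : ℝ) 0.4712 := by
  have h := tail_bound 1 3 1.1 (by norm_num) (by norm_num)
  simp only [Finset.sum_range_succ, Finset.sum_range_zero, bt, Nat.factorial] at h
  norm_num [abs_le, abs_of_nonneg] at h
  constructor <;> [linarith [h.1]; linarith [h.2]]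

lemma G_le_of_ge {t : ℝ} (ht : (1.1:ℝ) ≤ t) :
    besselJ 0 t ^ 2 + besselJ 1 t ^ 2 ≤ 3 / 4 := by
  have h := G_antitone (Set.self_mem_Ici) (Set.mem_Ici.2 ht) ht
  have h0 := J0_11_bounds
  have h1 := J1_11_bounds
  obtain ⟨h0l, h0r⟩ := h0
  obtain ⟨h1l, h1r⟩ := h1
  have : besselJ 0 1.1 ^ 2 + besselJ 1 1.1 ^ 2 ≤ 3 / 4 := by nlinarith
  simp only at h
  linarith
set_option maxHeartbeats 1000000 in
lemma small_core (u a b2 : ℝ) (hu0 : 0 < u) (hu1 : u ≤ 0.3025)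
    (ha1 : a ≤ 1 - u + 0.36 * u ^ 2) (ha2 : 1 - u - 0.36 * u ^ 2 ≤ a)
    (hb : u * (1 - u / 2 - 0.12 * u ^ 2) ^ 2 ≤ b2) (hb0 : 0 ≤ b2)
    (hpar : a ^ 2 + 2 * b2 ≤ 1) :
    0 < 1 - a ^ 2 ∧ (1 - a ^ 2 - 2 * b2) ^ 2 ≤ 4 * (1 - a ^ 2) ^ 3 := by
  have hq2 : (0:ℝ) < u ^ 2 := by positivity
  have hq3 : (0:ℝ) < u ^ 3 := by positivity
  have hq4 : (0:ℝ) < u ^ 4 := by positivity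
  have hq5 : (0:ℝ) < u ^ 5 := by positivity
  have hs : (0:ℝ) ≤ 0.3025 - u := by linarith
  have hu2 : u ^ 2 ≤ 0.3025 * u := by nlinarith
  have hu3 : u ^ 3 ≤ 0.3025 * u ^ 2 := by nlinarith
  have hu4 : u ^ 4 ≤ 0.3025 * u ^ 3 := by nlinarith
  have hu5 : u ^ 5 ≤ 0.3025 * u ^ 4 := by nlinarith
  have ha0 : (0.6 : ℝ) ≤ a := by nlinarith [ha2, hu2]
  have haM : a ^ 2 ≤ (1 - u + 0.36 * u ^ 2) ^ 2 := by
    nlinarith [mul_nonneg (sub_nonneg.2 ha1) (by linarith : (0:ℝ) ≤ (1 - u + 0.36 * u ^ 2) + a)]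
  have ham : (1 - u - 0.36 * u ^ 2) ^ 2 ≤ a ^ 2 := by
    nlinarith [mul_nonneg (sub_nonneg.2 ha2) (by nlinarith : (0:ℝ) ≤ a + (1 - u - 0.36 * u ^ 2))]
  have hDlo : 1.51 * u ≤ 1 - a ^ 2 := by
    nlinarith [haM, mul_nonneg (mul_nonneg hs hs) hu0.le, mul_nonneg hs (mul_pos hu0 hu0).le,
      mul_nonneg hs hu0.le, hu2, hu3, hu4]
  have hD : 0 < 1 - a ^ 2 := lt_of_lt_of_le (by positivity) hDlo
  have hL : 1 - a ^ 2 - 2 * b2 ≤ 1.72 * u ^ 2 := by nlinarith [ham, hb, hq3, hq4, hq5]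
  have hLpos : 0 ≤ 1 - a ^ 2 - 2 * b2 := by linarith
  refine ⟨hD, ?_⟩
  have step1 : (1 - a ^ 2 - 2 * b2) ^ 2 ≤ (1.72 * u ^ 2) ^ 2 := by
    nlinarith [mul_self_le_mul_self hLpos hL]
  have step2 : (1.72 * u ^ 2) ^ 2 ≤ 4 * (1.51 * u) ^ 3 := by nlinarith [hu4, hq3]
  have h15 : (0:ℝ) ≤ 1.51 * u := by positivity
  have step3 := pow_le_pow_left₀ h15 hDlo 3
  linarith

set_option maxHeartbeats 1000000 in
lemma main_ineq (t : ℝ) (ht : 0 < t) :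
    0 < 1 - besselJ 0 t ^ 2 ∧
      1 / 2 - besselJ 1 t ^ 2 / (1 - besselJ 0 t ^ 2) ≤ Real.sqrt (1 - besselJ 0 t ^ 2) := by
  have hpar := besselJ_sq_add_two_mul_sq_le_one ht.le
  by_cases hcase : t ≤ 1.1
  · -- small t : series estimates
    have hu : t ^ 2 / 4 < 1 := by nlinarith
    have hu0 : (0:ℝ) < t ^ 2 / 4 := by positivity
    have hu1 : t ^ 2 / 4 ≤ 0.3025 := by nlinarith
    have h1mu : (0.6975 : ℝ) ≤ 1 - t ^ 2 / 4 := by linarith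
    have h0 := tail_bound 0 2 t ht.le hu
    have h1 := tail_bound 1 2 t ht.le hu
    simp only [Finset.sum_range_succ, Finset.sum_range_zero, bt, Nat.factorial] at h0 h1
    norm_num at h0 h1
    -- clean error bounds
    have hE : |(t/2)^4/4| / (1 - t^2/4) ≤ 0.36 * (t^2/4) ^ 2 := by
      rw [abs_of_nonneg (by positivity : (0:ℝ) ≤ (t/2)^4/4),
        div_le_iff₀ (by linarith : (0:ℝ) < 1 - t^2/4)]
      have hc : (1:ℝ)/4 ≤ 0.36 * (1 - t^2/4) := by linarith
      calc (t/2)^4/4 = (t^2/4)^2 * (1/4) := by ring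
        _ ≤ (t^2/4)^2 * (0.36 * (1 - t^2/4)) := by
            apply mul_le_mul_of_nonneg_left hc (by positivity)
        _ = 0.36 * (t^2/4)^2 * (1 - t^2/4) := by ring
    have hF : |(t/2)^5/12| / (1 - t^2/4) ≤ 0.12 * (t/2) * (t^2/4) ^ 2 := by
      rw [abs_of_nonneg (by positivity : (0:ℝ) ≤ (t/2)^5/12),
        div_le_iff₀ (by linarith : (0:ℝ) < 1 - t^2/4)]
      have hc : (1:ℝ)/12 ≤ 0.12 * (1 - t^2/4) := by linarith
      calc (t/2)^5/12 = ((t/2) * (t^2/4)^2) * (1/12) := by ring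
        _ ≤ ((t/2) * (t^2/4)^2) * (0.12 * (1 - t^2/4)) := by
            apply mul_le_mul_of_nonneg_left hc (by positivity)
        _ = 0.12 * (t/2) * (t^2/4)^2 * (1 - t^2/4) := by ring
    have h0' : |besselJ 0 t - (1 - t^2/4)| ≤ 0.36 * (t^2/4) ^ 2 := by
      have he : (1 - t^2/4 : ℝ) = 1 + -(t/2)^2 := by ring
      rw [he]
      exact le_trans h0 hE
    have h1' : |besselJ 1 t - (t/2 - t/2 * ((t^2/4)/2))| ≤ 0.12 * (t/2) * (t^2/4) ^ 2 := by
      have he : (t/2 - t/2 * ((t^2/4)/2) : ℝ) = t/2 + -(t/2)^3/2 := by ring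
      rw [he]
      exact le_trans h1 hF
    clear h0 h1 hE hF
    obtain ⟨h0l, h0r⟩ := abs_le.1 h0'
    obtain ⟨h1l, h1r⟩ := abs_le.1 h1'
    have ha1 : besselJ 0 t ≤ 1 - t^2/4 + 0.36 * (t^2/4) ^ 2 := by linarith
    have ha2 : 1 - t^2/4 - 0.36 * (t^2/4) ^ 2 ≤ besselJ 0 t := by linarith
    have hbl : t/2 * (1 - (t^2/4) / 2 - 0.12 * (t^2/4) ^ 2) ≤ besselJ 1 t := by
      have he : t/2 * (1 - (t^2/4) / 2 - 0.12 * (t^2/4) ^ 2) =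
          (t/2 - t/2 * ((t^2/4)/2)) - 0.12 * (t/2) * (t^2/4) ^ 2 := by ring
      linarith [he.le, he.ge]
    have hblpos : 0 ≤ t/2 * (1 - (t^2/4) / 2 - 0.12 * (t^2/4) ^ 2) := by
      apply mul_nonneg (by positivity)
      nlinarith
    have hbsq : (t^2/4) * (1 - (t^2/4)/2 - 0.12 * (t^2/4) ^ 2) ^ 2 ≤ besselJ 1 t ^ 2 := by
      have h5 := mul_self_le_mul_self hblpos hbl
      calc (t^2/4) * (1 - (t^2/4)/2 - 0.12 * (t^2/4) ^ 2) ^ 2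
          = (t/2 * (1 - (t^2/4) / 2 - 0.12 * (t^2/4) ^ 2)) *
            (t/2 * (1 - (t^2/4) / 2 - 0.12 * (t^2/4) ^ 2)) := by ring
        _ ≤ besselJ 1 t * besselJ 1 t := h5
        _ = besselJ 1 t ^ 2 := by ring
    have hcore := small_core (t^2/4) (besselJ 0 t) (besselJ 1 t ^ 2) hu0 hu1 ha1 ha2 hbsq
      (sq_nonneg _) hpar
    obtain ⟨hD, hkey⟩ := hcore
    refine ⟨hD, ?_⟩
    have hnum_eq : 1 / 2 - besselJ 1 t ^ 2 / (1 - besselJ 0 t ^ 2) =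
        (1 - besselJ 0 t ^ 2 - 2 * besselJ 1 t ^ 2) / (2 * (1 - besselJ 0 t ^ 2)) := by
      field_simp
    rw [hnum_eq]
    apply Real.le_sqrt_of_sq_le
    rw [div_pow, div_le_iff₀ (by positivity)]
    nlinarith [hkey, sq_nonneg (1 - besselJ 0 t ^ 2)]
  · -- t ≥ 1.1
    push_neg at hcase
    have hG := G_le_of_ge (t := t) (by linarith)
    have hD : (1:ℝ)/4 ≤ 1 - besselJ 0 t ^ 2 := by nlinarith [sq_nonneg (besselJ 1 t)]
    refine ⟨by linarith, ?_⟩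
    have h2 : (1:ℝ)/2 ≤ Real.sqrt (1 - besselJ 0 t ^ 2) := by
      apply Real.le_sqrt_of_sq_le
      nlinarith
    have h3 : 0 ≤ besselJ 1 t ^ 2 / (1 - besselJ 0 t ^ 2) := by
      apply div_nonneg (sq_nonneg _) (by linarith)
    linarith

end BesselAux

/-- For every `t > 0`, `(1/2 - J₁(t)²/(1-J₀(t)²)) / √(1-J₀(t)²) ∈ [0, 1]`. -/
theorem stmt9 (t : ℝ) (ht : 0 < t) :
    (1 / 2 - besselJ 1 t ^ 2 / (1 - besselJ 0 t ^ 2)) /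
        Real.sqrt (1 - besselJ 0 t ^ 2) ∈ Set.Icc (0 : ℝ) 1 := by
  obtain ⟨hD, hle⟩ := BesselAux.main_ineq t ht
  have hpar := BesselAux.besselJ_sq_add_two_mul_sq_le_one ht.le
  have hnum : 0 ≤ 1 / 2 - besselJ 1 t ^ 2 / (1 - besselJ 0 t ^ 2) := by
    rw [sub_nonneg, div_le_iff₀ hD]
    nlinarith
  constructor
  · exact div_nonneg hnum (Real.sqrt_nonneg _)
  · rw [div_le_one (Real.sqrt_pos.2 hD)]
    exact hle
end
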